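/- arXiv:2003.04982 — 2 statements merged into one kernel-verified Lean document; each statement's English description precedes it below -/
import Mathlib

section
/- If f : (0,∞) → ℝ is measurable, |f(t)| ≤ C e^{ct} for t ≥ 1, and f(t) = A t^{ν} + o(t^{ν}) as t → 0⁺ with ν > -1, then the Laplace transform satisfies L(f)(p) = A Γ(ν+1) p^{-ν-1} + o(p^{-ν-1}) as p → ∞ along the reals. -/
/-! The remainder `g = f - A t^ν` is `o(t^ν)` at `0⁺`. Split its Laplace integral at a small `d`:
on `(0, d]` it is at most `ε ∫ e^{-pt} t^ν = ε Γ(ν+1) p^{-ν-1}`, while beyond `d` it is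
`O(e^{-pd})` once `p` exceeds the exponential type of `f`, which is negligible against any
power of `p`. -/

open MeasureTheory Set Filter Asymptotics Topology Real

noncomputable def laplaceTransform (f : ℝ → ℝ) (p : ℝ) : ℝ :=
  ∫ t in Ioi 0, exp (-p * t) * f t

theorem integrableOn_exp_neg_mul_rpow {ν p : ℝ} (hν : -1 < ν) (hp : 0 < p) :
    IntegrableOn (fun t => exp (-p * t) * t ^ ν) (Ioi 0) := by
  refine (integrableOn_rpow_mul_exp_neg_mul_rpow hν one_pos hp).congr_fun
    (fun t _ => ?_) measurableSet_Ioi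
  simp only [rpow_one, mul_comm]

theorem laplaceTransform_rpow {ν p : ℝ} (hν : -1 < ν) (hp : 0 < p) :
    laplaceTransform (· ^ ν) p = Gamma (ν + 1) * p ^ (-ν - 1) := by
  have h := integral_rpow_mul_exp_neg_mul_Ioi (a := ν + 1) (by linarith) hp
  simp only [add_sub_cancel_right, one_div, inv_rpow hp.le, ← rpow_neg hp.le] at h
  rw [laplaceTransform, show -ν - 1 = -(ν + 1) by ring, mul_comm, ← h]
  refine setIntegral_congr_fun measurableSet_Ioi (fun t _ => ?_)
  rw [neg_mul, mul_comm, mul_comm p]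

theorem MeasureTheory.IntegrableOn.exp_neg_mul_of_le {g : ℝ → ℝ} {p₀ p : ℝ}
    (h : IntegrableOn (fun t => exp (-p₀ * t) * g t) (Ioi 0)) (hp : p₀ ≤ p) :
    IntegrableOn (fun t => exp (-p * t) * g t) (Ioi 0) := by
  have hbdd : ∀ᵐ t ∂volume.restrict (Ioi 0), ‖exp (-(p - p₀) * t)‖ ≤ 1 := by
    filter_upwards [ae_restrict_mem measurableSet_Ioi] with t ht
    rw [norm_of_nonneg (exp_pos _).le, exp_le_one_iff]
    nlinarith [mem_Ioi.mp ht]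
  refine IntegrableOn.congr_fun (h.bdd_mul (by fun_prop) hbdd) (fun t _ => ?_) measurableSet_Ioi
  rw [← mul_assoc, ← exp_add]
  ring_nf

theorem integrableOn_exp_neg_mul_of_abs_le_exp {f : ℝ → ℝ} {C c p : ℝ} (hf : Measurable f)
    (hbound : ∀ t ≥ (1 : ℝ), |f t| ≤ C * exp (c * t)) (hloc : IntegrableOn f (Ioc 0 1))
    (hp : 0 ≤ p) (hpc : c < p) :
    IntegrableOn (fun t => exp (-p * t) * f t) (Ioi 0) := by
  have hnear : IntegrableOn (fun t => exp (-p * t) * f t) (Ioc 0 1) := by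
    refine hloc.bdd_mul (c := 1) (by fun_prop) ?_
    filter_upwards [ae_restrict_mem measurableSet_Ioc] with t ht
    rw [norm_of_nonneg (exp_pos _).le, exp_le_one_iff]
    nlinarith [ht.1]
  have htail : IntegrableOn (fun t => exp (-p * t) * f t) (Ioi 1) := by
    refine Integrable.mono' ((exp_neg_integrableOn_Ioi 1 (sub_pos.mpr hpc)).const_mul C)
      (by fun_prop) ?_
    filter_upwards [ae_restrict_mem measurableSet_Ioi] with t ht
    calc ‖exp (-p * t) * f t‖ = exp (-p * t) * |f t| := by
          rw [norm_mul, norm_of_nonneg (exp_pos _).le, norm_eq_abs]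
      _ ≤ exp (-p * t) * (C * exp (c * t)) := by gcongr; exact hbound t (le_of_lt ht)
      _ = C * exp (-(p - c) * t) := by rw [mul_left_comm, ← exp_add]; ring_nf
  rw [← Ioc_union_Ioi_eq_Ioi zero_le_one]
  exact hnear.union htail

theorem laplaceTransform_sub_const_mul_rpow {f : ℝ → ℝ} {A ν p : ℝ} (hν : -1 < ν) (hp : 0 < p)
    (hf : IntegrableOn (fun t => exp (-p * t) * f t) (Ioi 0)) :
    laplaceTransform (fun t => f t - A * t ^ ν) p
      = laplaceTransform f p - A * Gamma (ν + 1) * p ^ (-ν - 1) := by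
  rw [mul_assoc, ← laplaceTransform_rpow hν hp]
  simp only [laplaceTransform]
  rw [← integral_const_mul, ← integral_sub hf ((integrableOn_exp_neg_mul_rpow hν hp).const_mul A)]
  simp only [mul_sub, mul_left_comm]

theorem abs_setIntegral_Ioc_exp_neg_mul_le {g : ℝ → ℝ} {ν p d ε : ℝ} (hν : -1 < ν)
    (hp : 0 < p) (hε : 0 ≤ ε) (hg : ∀ t ∈ Ioc 0 d, |g t| ≤ ε * t ^ ν) :
    |∫ t in Ioc 0 d, exp (-p * t) * g t| ≤ ε * Gamma (ν + 1) * p ^ (-ν - 1) := by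
  have hint := integrableOn_exp_neg_mul_rpow hν hp
  calc |∫ t in Ioc 0 d, exp (-p * t) * g t|
      ≤ ∫ t in Ioc 0 d, ε * (exp (-p * t) * t ^ ν) := by
        rw [← norm_eq_abs]
        refine norm_integral_le_of_norm_le ((hint.mono_set Ioc_subset_Ioi_self).const_mul ε) ?_
        filter_upwards [ae_restrict_mem measurableSet_Ioc] with t ht
        rw [norm_mul, norm_of_nonneg (exp_pos _).le, norm_eq_abs, mul_left_comm]
        exact mul_le_mul_of_nonneg_left (hg t ht) (exp_pos _).le
    _ ≤ ∫ t in Ioi 0, ε * (exp (-p * t) * t ^ ν) := by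
        refine setIntegral_mono_set (hint.const_mul ε) ?_ Ioc_subset_Ioi_self.eventuallyLE
        filter_upwards [ae_restrict_mem measurableSet_Ioi] with t ht
        have := rpow_pos_of_pos ht ν
        positivity
    _ = ε * Gamma (ν + 1) * p ^ (-ν - 1) := by
        rw [integral_const_mul, mul_assoc, ← laplaceTransform_rpow hν hp, laplaceTransform]

theorem abs_setIntegral_Ioi_exp_neg_mul_le {g : ℝ → ℝ} {p₀ p d : ℝ} (hp : p₀ ≤ p)
    (hint : IntegrableOn (fun t => exp (-p₀ * t) * g t) (Ioi d)) :
    |∫ t in Ioi d, exp (-p * t) * g t|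
      ≤ exp (-(p - p₀) * d) * ∫ t in Ioi d, exp (-p₀ * t) * |g t| := by
  rw [← integral_const_mul, ← norm_eq_abs]
  have hint' : IntegrableOn (fun t => exp (-p₀ * t) * |g t|) (Ioi d) :=
    IntegrableOn.congr_fun hint.norm (fun t _ => by
      rw [norm_mul, norm_of_nonneg (exp_pos _).le, norm_eq_abs]) measurableSet_Ioi
  refine norm_integral_le_of_norm_le (hint'.const_mul _) ?_
  filter_upwards [ae_restrict_mem measurableSet_Ioi] with t ht
  have hexp : exp (-p * t) ≤ exp (-(p - p₀) * d) * exp (-p₀ * t) := by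
    rw [← exp_add, exp_le_exp]
    nlinarith [mem_Ioi.mp ht]
  rw [norm_mul, norm_of_nonneg (exp_pos _).le, norm_eq_abs, ← mul_assoc]
  exact mul_le_mul_of_nonneg_right hexp (abs_nonneg _)

theorem laplaceTransform_isLittleO_rpow {g : ℝ → ℝ} {ν p₀ : ℝ} (hν : -1 < ν)
    (hint : IntegrableOn (fun t => exp (-p₀ * t) * g t) (Ioi 0))
    (hg : g =o[𝓝[>] 0] fun t => t ^ ν) :
    laplaceTransform g =o[atTop] fun p => p ^ (-ν - 1) := by
  have hΓ : 0 < Gamma (ν + 1) := Gamma_pos_of_pos (by linarith)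
  refine isLittleO_iff.mpr fun ε hε => ?_
  set ε₁ := ε / (2 * Gamma (ν + 1))
  have hε₁ : 0 < ε₁ := div_pos hε (by positivity)
  obtain ⟨d, hd, hnear⟩ : ∃ d > 0, ∀ t ∈ Ioc 0 d, |g t| ≤ ε₁ * t ^ ν := by
    obtain ⟨d, hd, hsub⟩ := mem_nhdsGT_iff_exists_Ioc_subset.mp (hg.def hε₁)
    refine ⟨d, hd, fun t ht => ?_⟩
    simpa [abs_of_pos (rpow_pos_of_pos ht.1 ν)] using hsub ht
  set M := ∫ t in Ioi d, exp (-p₀ * t) * |g t|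
  have htail : (fun p => exp (-(p - p₀) * d) * M) =o[atTop] fun p => p ^ (-ν - 1) := by
    refine ((isLittleO_exp_neg_mul_rpow_atTop hd (-ν - 1)).const_mul_left
      (exp (p₀ * d) * M)).congr_left fun p => ?_
    rw [mul_comm, ← mul_assoc, ← exp_add]
    ring_nf
  filter_upwards [htail.def (half_pos hε), eventually_gt_atTop 0, eventually_ge_atTop p₀]
    with p hT hp hp₀
  have hintp := hint.exp_neg_mul_of_le hp₀
  rw [norm_of_nonneg (rpow_pos_of_pos hp _).le, norm_eq_abs] at hT ⊢
  rw [laplaceTransform, ← Ioc_union_Ioi_eq_Ioi hd.le,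
    setIntegral_union (Ioc_disjoint_Ioi le_rfl) measurableSet_Ioi
      (hintp.mono_set Ioc_subset_Ioi_self) (hintp.mono_set (Ioi_subset_Ioi hd.le))]
  calc _ ≤ |∫ t in Ioc 0 d, exp (-p * t) * g t| + |∫ t in Ioi d, exp (-p * t) * g t| :=
        abs_add_le _ _
    _ ≤ ε₁ * Gamma (ν + 1) * p ^ (-ν - 1) + ε / 2 * p ^ (-ν - 1) := by
        gcongr
        · exact abs_setIntegral_Ioc_exp_neg_mul_le hν hp hε₁.le hnear
        · exact (abs_setIntegral_Ioi_exp_neg_mul_le hp₀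
            (hint.mono_set (Ioi_subset_Ioi hd.le))).trans ((le_abs_self _).trans hT)
    _ = ε * p ^ (-ν - 1) := by
        simp only [ε₁]
        field_simp
        ring

theorem abelian_laplace_at_top (f : ℝ → ℝ) (hf : Measurable f) (C c : ℝ)
    (hbound : ∀ t ≥ (1 : ℝ), |f t| ≤ C * Real.exp (c * t))
    (hloc : IntegrableOn f (Ioc 0 1))
    (A ν : ℝ) (hν : -1 < ν)
    (hasymp : (fun t => f t - A * t ^ ν) =o[nhdsWithin 0 (Ioi 0)] fun t => t ^ ν) :
    (fun p => (∫ t in Ioi (0 : ℝ), Real.exp (-p * t) * f t)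
        - A * Real.Gamma (ν + 1) * p ^ (-ν - 1)) =o[atTop] fun p => p ^ (-ν - 1) := by
  have hf_int : ∀ p > max c 0, IntegrableOn (fun t => exp (-p * t) * f t) (Ioi 0) :=
    fun p hp => integrableOn_exp_neg_mul_of_abs_le_exp hf hbound hloc
      (le_max_right c 0 |>.trans hp.le) (le_max_left c 0 |>.trans_lt hp)
  set p₀ := max c 0 + 1
  have hp₀ : 0 < p₀ := by positivity
  have hrem_int : IntegrableOn (fun t => exp (-p₀ * t) * (f t - A * t ^ ν)) (Ioi 0) := by
    refine IntegrableOn.congr_fun ((hf_int p₀ (lt_add_one _)).sub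
      ((integrableOn_exp_neg_mul_rpow hν hp₀).const_mul A)) (fun t _ => ?_) measurableSet_Ioi
    simp only [Pi.sub_apply]
    ring
  refine (laplaceTransform_isLittleO_rpow hν hrem_int hasymp).congr' ?_ EventuallyEq.rfl
  filter_upwards [eventually_gt_atTop (max c 0)] with p hp
  exact laplaceTransform_sub_const_mul_rpow hν ((le_max_right c 0).trans_lt hp) (hf_int p hp)
end

section
/- Injectivity of the Laplace transform: if f, g : [0,∞) → ℝ are continuous functions of exponential order and L(f)(p) = L(g)(p) for all sufficiently large real p, then f = g. -/
/-!
Lerch's theorem. The substitution `x = exp (-t)` turns the Laplace transform of `h` at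
`p = s + 1 + n` into the `n`-th moment on `[0, 1]` of `φ x = x ^ s * h (-log x)`. For
`s` larger than the growth exponent of `h`, `φ` is continuous on `[0, 1]` with `φ 0 = 0`, so if
the Laplace transform of `h` vanishes for all large `p`, then `φ` is orthogonal to every
polynomial; by Weierstrass approximation `∫ φ ^ 2 = 0`, hence `φ = 0` and `h = 0`.
-/

open MeasureTheory Set Real Polynomial Filter Topology

section ExpBound

variable {f g : ℝ → ℝ} {M M₁ M₂ c c' c₁ c₂ : ℝ}

theorem exp_bound_mono (hf : ∀ t ≥ 0, |f t| ≤ M * exp (c * t)) (hcc' : c ≤ c') :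
    ∀ t ≥ 0, |f t| ≤ M * exp (c' * t) := by
  intro t ht
  have hM : 0 ≤ M := nonneg_of_mul_nonneg_left ((abs_nonneg _).trans (hf t ht)) (exp_pos _)
  exact (hf t ht).trans <|
    mul_le_mul_of_nonneg_left (exp_le_exp.2 (mul_le_mul_of_nonneg_right hcc' ht)) hM

theorem exp_bound_sub (hf : ∀ t ≥ 0, |f t| ≤ M₁ * exp (c₁ * t))
    (hg : ∀ t ≥ 0, |g t| ≤ M₂ * exp (c₂ * t)) :
    ∀ t ≥ 0, |f t - g t| ≤ (M₁ + M₂) * exp (max c₁ c₂ * t) := by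
  intro t ht
  calc |f t - g t| ≤ |f t| + |g t| := abs_sub _ _
    _ ≤ M₁ * exp (max c₁ c₂ * t) + M₂ * exp (max c₁ c₂ * t) :=
      add_le_add (exp_bound_mono hf (le_max_left _ _) t ht)
        (exp_bound_mono hg (le_max_right _ _) t ht)
    _ = (M₁ + M₂) * exp (max c₁ c₂ * t) := (add_mul _ _ _).symm

theorem integrableOn_exp_neg_mul_mul (hf : AEStronglyMeasurable f (volume.restrict (Ioi 0)))
    (hb : ∀ t ≥ 0, |f t| ≤ M * exp (c * t)) {p : ℝ} (hcp : c < p) :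
    IntegrableOn (fun t => exp (-p * t) * f t) (Ioi 0) := by
  refine Integrable.mono' ((exp_neg_integrableOn_Ioi 0 (sub_pos.2 hcp)).const_mul M)
    ((continuous_exp.comp (continuous_const.mul continuous_id)).aestronglyMeasurable.mul hf) ?_
  filter_upwards [ae_restrict_mem measurableSet_Ioi] with t ht
  calc ‖exp (-p * t) * f t‖ = exp (-p * t) * |f t| := by
        rw [norm_mul, norm_of_nonneg (exp_pos _).le, norm_eq_abs]
    _ ≤ exp (-p * t) * (M * exp (c * t)) :=
        mul_le_mul_of_nonneg_left (hb t (le_of_lt ht)) (exp_pos _).le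
    _ = M * exp (-(p - c) * t) := by rw [mul_left_comm, ← exp_add]; ring_nf

end ExpBound

theorem integral_eval_mul_eq_zero {φ : ℝ → ℝ} {a b : ℝ} (hab : a ≤ b)
    (hφ : ContinuousOn φ (Icc a b)) (hmom : ∀ n : ℕ, ∫ x in a..b, x ^ n * φ x = 0)
    (P : ℝ[X]) :
    ∫ x in a..b, P.eval x * φ x = 0 := by
  induction P using Polynomial.induction_on' with
  | add P Q hP hQ =>
    have hint (R : ℝ[X]) : IntervalIntegrable (fun x => R.eval x * φ x) volume a b :=
      (R.continuous.continuousOn.mul hφ).intervalIntegrable_of_Icc hab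
    simp only [eval_add, add_mul]
    rw [intervalIntegral.integral_add (hint P) (hint Q), hP, hQ, add_zero]
  | monomial n r =>
    simp only [eval_monomial, mul_assoc, intervalIntegral.integral_const_mul, hmom, mul_zero]

theorem eqOn_zero_of_integral_pow_mul_eq_zero {φ : ℝ → ℝ} {a b : ℝ} (hab : a < b)
    (hφ : ContinuousOn φ (Icc a b)) (hmom : ∀ n : ℕ, ∫ x in a..b, x ^ n * φ x = 0) :
    EqOn φ 0 (Icc a b) := by
  obtain ⟨K, hK⟩ := isCompact_Icc.exists_bound_of_continuousOn hφ
  have hint (u : ℝ → ℝ) (hu : ContinuousOn u (Icc a b)) :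
      IntervalIntegrable (fun x => u x * φ x) volume a b :=
    (hu.mul hφ).intervalIntegrable_of_Icc hab.le
  have hsq_le (ε : ℝ) (hε : 0 < ε) : |∫ x in a..b, φ x * φ x| ≤ ε * (K * |b - a|) := by
    obtain ⟨P, hP⟩ := exists_polynomial_near_of_continuousOn a b φ hφ ε hε
    have hsub : ∫ x in a..b, φ x * φ x = ∫ x in a..b, (φ x - P.eval x) * φ x := by
      simp only [sub_mul]
      rw [intervalIntegral.integral_sub (hint φ hφ) (hint _ P.continuous.continuousOn),
        integral_eval_mul_eq_zero hab.le hφ hmom, sub_zero]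
    rw [hsub, ← mul_assoc, ← norm_eq_abs]
    refine intervalIntegral.norm_integral_le_of_norm_le_const fun x hx => ?_
    have hx' : x ∈ Icc a b := Ioc_subset_Icc_self (uIoc_of_le hab.le ▸ hx)
    rw [norm_mul]
    exact mul_le_mul (by rw [norm_eq_abs, abs_sub_comm]; exact (hP x hx').le) (hK x hx')
      (norm_nonneg _) hε.le
  have hsq : ∫ x in a..b, φ x * φ x = 0 := by
    have hlim : Tendsto (fun ε => ε * (K * |b - a|)) (𝓝[>] 0) (𝓝 0) :=
      ((continuous_id.mul continuous_const).tendsto' 0 0 (zero_mul _)).mono_left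
        nhdsWithin_le_nhds
    exact abs_nonpos_iff.1 (ge_of_tendsto hlim (eventually_nhdsWithin_of_forall hsq_le))
  intro x hx
  by_contra hx0
  exact (intervalIntegral.integral_pos hab (hφ.mul hφ) (fun y _ => mul_self_nonneg _)
    ⟨x, hx, mul_self_pos.2 hx0⟩).ne' hsq

section NegLogSubstitution

theorem integral_Ioo_rpow_mul_comp_neg_log (r : ℝ) (ψ : ℝ → ℝ) :
    ∫ x in Ioo (0 : ℝ) 1, x ^ r * ψ (-log x) = ∫ t in Ioi 0, exp (-(r + 1) * t) * ψ t := by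
  have himage : (fun t => exp (-t)) '' Ioi 0 = Ioo 0 1 := by
    ext x
    constructor
    · rintro ⟨t, ht, rfl⟩
      exact ⟨exp_pos _, exp_lt_one_iff.2 (neg_lt_zero.2 ht)⟩
    · rintro ⟨hx0, hx1⟩
      exact ⟨-log x, neg_pos.2 (log_neg hx0 hx1), by simp [exp_log hx0]⟩
  rw [← himage, integral_image_eq_integral_abs_deriv_smul measurableSet_Ioi
    (fun t _ => ((hasDerivAt_neg t).exp).hasDerivWithinAt)
    (fun t₁ _ t₂ _ h => neg_injective (exp_injective h))]
  refine setIntegral_congr_fun measurableSet_Ioi fun t _ => ?_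
  rw [smul_eq_mul, log_exp, neg_neg, mul_neg_one, abs_neg, abs_of_pos (exp_pos _),
    rpow_def_of_pos (exp_pos _), log_exp, ← mul_assoc, ← exp_add]
  ring_nf

variable {h : ℝ → ℝ} {M c s : ℝ}

theorem abs_rpow_mul_comp_neg_log_le (hb : ∀ t ≥ 0, |h t| ≤ M * exp (c * t)) (hcs : c < s)
    (hs : s ≠ 0) {x : ℝ} (hx : x ∈ Icc (0 : ℝ) 1) :
    |x ^ s * h (-log x)| ≤ M * x ^ (s - c) := by
  rcases hx.1.eq_or_lt with rfl | hx0
  · simp [zero_rpow hs, zero_rpow (sub_pos.2 hcs).ne']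
  have hlog : 0 ≤ -log x := neg_nonneg.2 (log_nonpos hx0.le hx.2)
  calc |x ^ s * h (-log x)| = x ^ s * |h (-log x)| := by
        rw [abs_mul, abs_of_pos (rpow_pos_of_pos hx0 s)]
    _ ≤ x ^ s * (M * exp (c * -log x)) :=
        mul_le_mul_of_nonneg_left (hb _ hlog) (rpow_pos_of_pos hx0 s).le
    _ = M * x ^ (s - c) := by
        rw [rpow_sub hx0, rpow_def_of_pos hx0 c, mul_neg, exp_neg, div_eq_mul_inv, mul_comm c]
        ring

theorem continuousOn_rpow_mul_comp_neg_log (hh : ContinuousOn h (Ici 0))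
    (hb : ∀ t ≥ 0, |h t| ≤ M * exp (c * t)) (hcs : c < s) (hs : s ≠ 0) :
    ContinuousOn (fun x => x ^ s * h (-log x)) (Icc 0 1) := by
  intro x hx
  rcases hx.1.eq_or_lt with rfl | hx0
  · have hlim : Tendsto (fun y : ℝ => M * y ^ (s - c)) (𝓝[Icc 0 1] 0) (𝓝 0) := by
      simpa [zero_rpow (sub_pos.2 hcs).ne'] using
        ((continuousAt_rpow_const 0 (s - c) (Or.inr (sub_pos.2 hcs).le)).const_mul M).tendsto
          |>.mono_left nhdsWithin_le_nhds
    rw [ContinuousWithinAt, zero_rpow hs, zero_mul]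
    exact squeeze_zero_norm' (eventually_nhdsWithin_of_forall
      fun y hy => abs_rpow_mul_comp_neg_log_le hb hcs hs hy) hlim
  · have hIoc : Ioc 0 1 ∈ 𝓝[Icc 0 1] x :=
      mem_nhdsWithin.2 ⟨Ioi 0, isOpen_Ioi, hx0, fun y hy => ⟨hy.1, hy.2.2⟩⟩
    have hmaps : MapsTo (fun y => -log y) (Ioc 0 1) (Ici 0) :=
      fun y hy => neg_nonneg.2 (log_nonpos hy.1.le hy.2)
    refine ContinuousWithinAt.mono_of_mem_nhdsWithin ?_ hIoc
    exact (continuousAt_rpow_const x s (Or.inl hx0.ne')).continuousWithinAt.mul <|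
      (hh _ (hmaps ⟨hx0, hx.2⟩)).comp (f := fun y => -log y)
        (continuousAt_log hx0.ne').neg.continuousWithinAt hmaps

end NegLogSubstitution

theorem eq_zero_of_laplace_eq_zero {h : ℝ → ℝ} {M c p₀ : ℝ} (hh : ContinuousOn h (Ici 0))
    (hb : ∀ t ≥ 0, |h t| ≤ M * exp (c * t))
    (hL : ∀ p ≥ p₀, ∫ t in Ioi 0, exp (-p * t) * h t = 0) :
    ∀ t ≥ 0, h t = 0 := by
  obtain ⟨s, hcs, hs, hp₀s⟩ : ∃ s, c < s ∧ 0 < s ∧ p₀ ≤ s + 1 :=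
    ⟨max (max c p₀) 0 + 1, by grind, by grind, by grind⟩
  have hφ := continuousOn_rpow_mul_comp_neg_log hh hb hcs hs.ne'
  have hmom (n : ℕ) : ∫ x in (0 : ℝ)..1, x ^ n * (x ^ s * h (-log x)) = 0 := by
    rw [intervalIntegral.integral_of_le zero_le_one, integral_Ioc_eq_integral_Ioo,
      setIntegral_congr_fun measurableSet_Ioo (g := fun x => x ^ ((n : ℝ) + s) * h (-log x))
        fun x hx => by dsimp only; rw [rpow_add hx.1, rpow_natCast, mul_assoc],
      integral_Ioo_rpow_mul_comp_neg_log]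
    exact hL _ (by grind)
  intro t ht
  have hx : exp (-t) ∈ Icc (0 : ℝ) 1 := ⟨(exp_pos _).le, exp_le_one_iff.2 (neg_nonpos.2 ht)⟩
  have := eqOn_zero_of_integral_pow_mul_eq_zero zero_lt_one hφ hmom hx
  simpa [(rpow_pos_of_pos (exp_pos _) s).ne'] using this

theorem laplace_injective (f g : ℝ → ℝ)
    (hf : ContinuousOn f (Ici 0)) (hg : ContinuousOn g (Ici 0))
    (hfexp : ∃ M c, ∀ t ≥ (0 : ℝ), |f t| ≤ M * Real.exp (c * t))
    (hgexp : ∃ M c, ∀ t ≥ (0 : ℝ), |g t| ≤ M * Real.exp (c * t))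
    (hL : ∃ p₀ : ℝ, ∀ p ≥ p₀,
      ∫ t in Ioi (0 : ℝ), Real.exp (-p * t) * f t
        = ∫ t in Ioi (0 : ℝ), Real.exp (-p * t) * g t) :
    ∀ t ≥ (0 : ℝ), f t = g t := by
  obtain ⟨Mf, cf, hbf⟩ := hfexp
  obtain ⟨Mg, cg, hbg⟩ := hgexp
  obtain ⟨p₀, hp₀⟩ := hL
  have hLsub : ∀ p ≥ max p₀ (max cf cg + 1),
      ∫ t in Ioi 0, exp (-p * t) * (f t - g t) = 0 := by
    intro p hp
    have hmeas {u : ℝ → ℝ} (hu : ContinuousOn u (Ici 0)) :=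
      (hu.mono Ioi_subset_Ici_self).aestronglyMeasurable (μ := volume) measurableSet_Ioi
    simp only [mul_sub]
    rw [integral_sub (integrableOn_exp_neg_mul_mul (hmeas hf) hbf (by grind))
      (integrableOn_exp_neg_mul_mul (hmeas hg) hbg (by grind)), hp₀ p (by grind), sub_self]
  intro t ht
  exact sub_eq_zero.1 (eq_zero_of_laplace_eq_zero (hf.sub hg) (exp_bound_sub hbf hbg) hLsub t ht)
end
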